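/- (Heath-Brown, conditional form) Let δ > 0 and A > 0, and suppose that M₂(x, h) ≤ A h x log x for all x ≥ 2 and all h with 1 ≤ h ≤ x^{1/2 + δ}. Then there is a constant C, depending only on A and δ, such that for all x ≥ 2 and all H ≥ 1, N(x, H) ≤ C (x/H²) log x and S(x, H) ≤ C (x/H) log x. -/

import Mathlib

/-!
If `p_{n+1} - p_n ≥ H ≥ 2h`, then `θ(y + h) = θ(y)` for `y ∈ [p_n, p_{n+1} - h)`, so the integrand
of `M₂(x, h)` equals `h²` on a set of measure at least `(p_{n+1} - p_n) / 2`. Summing over the gaps,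
`h² S(x, H) ≤ 2 M₂(x, h) ≤ 2 A h x log x`. For `H ≤ 2 x^{1/2+δ}` take `h = H / 2`. For larger `H`
take `h = x^{1/2+δ}`, so that `S(x, H) ≤ 2 A x^{1/2-δ} log x`; since a nonempty sum of gaps `≥ H` is
itself `≥ H`, `H S(x, H) ≤ S(x, H)² ≤ 4 A² x^{1-2δ} log² x ≤ (2 A² / δ) x log x`.
Finally `H N(x, H) ≤ S(x, H)`.
-/

open scoped Classical

/-- The n-th prime (0-indexed: `nthPrime 0 = 2`). -/
noncomputable def nthPrime (n : ℕ) : ℕ := Nat.nth Nat.Prime n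

/-- The indices n with p_{n+1} ≤ x and p_{n+1} - p_n ≥ H. -/
noncomputable def gapSet (x H : ℝ) : Finset ℕ :=
  (Finset.range ⌈x⌉₊).filter fun n =>
    (nthPrime (n + 1) : ℝ) ≤ x ∧ H ≤ (nthPrime (n + 1) : ℝ) - nthPrime n

/-- N(x, H): the number of consecutive prime pairs p_n < p_{n+1} ≤ x with gap ≥ H. -/
noncomputable def Ngap (x H : ℝ) : ℝ := ((gapSet x H).card : ℝ)

/-- S(x, H): the sum of gaps p_{n+1} - p_n over pairs with p_{n+1} ≤ x and gap ≥ H. -/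
noncomputable def Sgap (x H : ℝ) : ℝ :=
  ∑ n ∈ gapSet x H, ((nthPrime (n + 1) : ℝ) - nthPrime n)

/-- The Chebyshev theta function θ(t) = Σ_{p ≤ t} log p. -/
noncomputable def chebTheta (t : ℝ) : ℝ :=
  ∑ p ∈ (Finset.range (⌊t⌋₊ + 1)).filter Nat.Prime, Real.log p

/-- The second moment M₂(x, h) = ∫₁ˣ (θ(y+h) - θ(y) - h)² dy. -/
noncomputable def M2 (x h : ℝ) : ℝ :=
  ∫ y in (1:ℝ)..x, (chebTheta (y + h) - chebTheta y - h) ^ 2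

open MeasureTheory

lemma nthPrime_prime (n : ℕ) : (nthPrime n).Prime := Nat.prime_nth_prime n

lemma nthPrime_strictMono : StrictMono nthPrime := Nat.nth_strictMono Nat.infinite_setOfPred_prime

lemma nthPrime_succ_le_of_lt {n q : ℕ} (hq : q.Prime) (h : nthPrime n < q) :
    nthPrime (n + 1) ≤ q := by
  by_contra! h'
  exact (Nat.le_nth_of_lt_nth_succ h' hq).not_gt h

lemma nthPrime_add_two_le_succ {n : ℕ} (hn : n ≠ 0) : nthPrime n + 2 ≤ nthPrime (n + 1) := by
  have h2 : 2 < nthPrime n :=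
    Nat.nth_prime_zero_eq_two ▸ nthPrime_strictMono (Nat.pos_of_ne_zero hn)
  have hlt : nthPrime n < nthPrime (n + 1) := nthPrime_strictMono n.lt_succ_self
  obtain ⟨a, ha⟩ := (nthPrime_prime n).odd_of_ne_two h2.ne'
  obtain ⟨b, hb⟩ := (nthPrime_prime (n + 1)).odd_of_ne_two (h2.trans hlt).ne'
  omega

noncomputable def primeGap (n : ℕ) : ℝ := (nthPrime (n + 1) : ℝ) - nthPrime n

lemma primeGap_pos (n : ℕ) : 0 < primeGap n := by
  have : (nthPrime n : ℝ) < nthPrime (n + 1) := by exact_mod_cast nthPrime_strictMono n.lt_succ_self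
  unfold primeGap; linarith

lemma primeGap_zero : primeGap 0 = 1 := by
  norm_num [primeGap, nthPrime, Nat.nth_prime_zero_eq_two, Nat.nth_prime_one_eq_three]

lemma two_le_primeGap {n : ℕ} (hn : n ≠ 0) : 2 ≤ primeGap n := by
  have : ((nthPrime n + 2 : ℕ) : ℝ) ≤ nthPrime (n + 1) := by
    exact_mod_cast nthPrime_add_two_le_succ hn
  push_cast at this
  unfold primeGap; linarith

lemma mem_gapSet {x H : ℝ} {n : ℕ} :
    n ∈ gapSet x H ↔ n < ⌈x⌉₊ ∧ (nthPrime (n + 1) : ℝ) ≤ x ∧ H ≤ primeGap n := by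
  simp [gapSet, primeGap]

lemma Sgap_eq_sum_primeGap (x H : ℝ) : Sgap x H = ∑ n ∈ gapSet x H, primeGap n := rfl

lemma Sgap_nonneg (x H : ℝ) : 0 ≤ Sgap x H :=
  Finset.sum_nonneg fun n _ => (primeGap_pos n).le

lemma Ngap_mul_le_Sgap (x H : ℝ) : Ngap x H * H ≤ Sgap x H := by
  rw [Ngap, Sgap_eq_sum_primeGap, ← nsmul_eq_mul]
  exact Finset.card_nsmul_le_sum _ _ _ fun n hn => (mem_gapSet.1 hn).2.2

lemma mul_Sgap_le_sq_Sgap (x H : ℝ) : H * Sgap x H ≤ Sgap x H ^ 2 := by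
  rcases (gapSet x H).eq_empty_or_nonempty with hempty | ⟨n, hn⟩
  · simp [Sgap, hempty]
  · have hH : H ≤ Sgap x H := (mem_gapSet.1 hn).2.2.trans
      (Finset.single_le_sum (fun m _ => (primeGap_pos m).le) hn)
    nlinarith [Sgap_nonneg x H]

lemma gapSet_subset_insert_zero (x H : ℝ) : gapSet x H ⊆ insert 0 (gapSet x 2) := by
  intro n hn
  obtain ⟨hnx, hpx, -⟩ := mem_gapSet.1 hn
  rcases eq_or_ne n 0 with rfl | hn0
  · exact Finset.mem_insert_self _ _
  · exact Finset.mem_insert_of_mem (mem_gapSet.2 ⟨hnx, hpx, two_le_primeGap hn0⟩)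

-- Only the first gap, `3 - 2`, is smaller than `2`.
lemma Sgap_le_one_add_Sgap_two (x H : ℝ) : Sgap x H ≤ 1 + Sgap x 2 := by
  have h0 : 0 ∉ gapSet x 2 := fun h => by
    have := (mem_gapSet.1 h).2.2; rw [primeGap_zero] at this; norm_num at this
  calc Sgap x H ≤ ∑ n ∈ insert 0 (gapSet x 2), primeGap n :=
        Finset.sum_le_sum_of_subset_of_nonneg (gapSet_subset_insert_zero x H)
          fun n _ _ => (primeGap_pos n).le
    _ = 1 + Sgap x 2 := by rw [Finset.sum_insert h0, primeGap_zero, Sgap_eq_sum_primeGap]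

lemma chebTheta_nonneg (t : ℝ) : 0 ≤ chebTheta t :=
  Finset.sum_nonneg fun p _ => Real.log_natCast_nonneg p

lemma chebTheta_mono : Monotone chebTheta := fun _ _ hab =>
  Finset.sum_le_sum_of_subset_of_nonneg
    (Finset.filter_subset_filter _ (Finset.range_subset_range.2 (Nat.add_le_add_right
      (Nat.floor_mono hab) 1)))
    fun p _ _ => Real.log_natCast_nonneg p

lemma chebTheta_eq_of_forall_not_prime {a b : ℝ} (ha : 0 ≤ a) (hab : a ≤ b)
    (hnp : ∀ q : ℕ, q.Prime → (q : ℝ) ∉ Set.Ioc a b) : chebTheta b = chebTheta a := by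
  unfold chebTheta
  congr 1
  ext q
  simp only [Finset.mem_filter, Finset.mem_range, Nat.lt_succ_iff, and_congr_left_iff]
  intro hq
  rw [Nat.le_floor_iff (ha.trans hab), Nat.le_floor_iff ha]
  exact ⟨fun hqb => not_lt.1 fun hqa => hnp q hq ⟨hqa, hqb⟩, fun hqa => hqa.trans hab⟩

lemma chebTheta_add_eq_of_mem_Ico {n : ℕ} {h y : ℝ} (hh : 0 ≤ h)
    (hy : y ∈ Set.Ico (nthPrime n : ℝ) (nthPrime (n + 1) - h)) :
    chebTheta (y + h) = chebTheta y := by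
  have h2 : (2 : ℝ) ≤ nthPrime n := by exact_mod_cast (nthPrime_prime n).two_le
  refine chebTheta_eq_of_forall_not_prime (by linarith [hy.1]) (by linarith) ?_
  rintro q hq ⟨hyq, hqy⟩
  have hnq : nthPrime n < q := by exact_mod_cast hy.1.trans_lt hyq
  have : (nthPrime (n + 1) : ℝ) ≤ q := by exact_mod_cast nthPrime_succ_le_of_lt hq hnq
  linarith [hy.2]

lemma integrableOn_M2_integrand {h : ℝ} (hh : 0 ≤ h) (a x : ℝ) :
    IntegrableOn (fun y => (chebTheta (y + h) - chebTheta y - h) ^ 2) (Set.Ioc a x) := by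
  have hmeas : Measurable fun y => (chebTheta (y + h) - chebTheta y - h) ^ 2 :=
    (((chebTheta_mono.measurable.comp (measurable_add_const h)).sub
      chebTheta_mono.measurable).sub_const h).pow_const 2
  refine Measure.integrableOn_of_bounded (M := (chebTheta (x + h) + h) ^ 2)
    measure_Ioc_lt_top.ne hmeas.aestronglyMeasurable ?_
  refine (ae_restrict_iff' measurableSet_Ioc).2 (Filter.Eventually.of_forall fun y hy => ?_)
  have h1 : chebTheta y ≤ chebTheta (y + h) := chebTheta_mono (by linarith)
  have h2 : chebTheta (y + h) ≤ chebTheta (x + h) := chebTheta_mono (by linarith [hy.2])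
  have h3 := chebTheta_nonneg y
  rw [Real.norm_eq_abs, abs_of_nonneg (sq_nonneg _)]
  exact sq_le_sq' (by linarith) (by linarith)

lemma setIntegral_M2_integrand_Ico {n : ℕ} {h : ℝ} (hh : 0 ≤ h) (hgap : h ≤ primeGap n) :
    ∫ y in Set.Ico (nthPrime n : ℝ) (nthPrime (n + 1) - h),
      (chebTheta (y + h) - chebTheta y - h) ^ 2 = h ^ 2 * (primeGap n - h) := by
  rw [setIntegral_congr_fun measurableSet_Ico (g := fun _ => h ^ 2), setIntegral_const,
    measureReal_def, Real.volume_Ico, smul_eq_mul, ENNReal.toReal_ofReal]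
  · unfold primeGap; ring
  · unfold primeGap at hgap; linarith
  · intro y hy
    simp only [chebTheta_add_eq_of_mem_Ico hh hy, sub_self, zero_sub, neg_sq]

lemma pairwise_disjoint_Ico_nthPrime {h : ℝ} (hh : 0 ≤ h) :
    Pairwise (Function.onFun Disjoint fun n =>
      Set.Ico (nthPrime n : ℝ) (nthPrime (n + 1) - h)) := by
  refine pairwise_disjoint_on _ |>.2 fun m n hmn => Set.disjoint_left.2 fun y hym hyn => ?_
  have : (nthPrime (m + 1) : ℝ) ≤ nthPrime n := by exact_mod_cast nthPrime_strictMono.monotone hmn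
  linarith [hym.2, hyn.1]

lemma sq_mul_sum_primeGap_sub_le_M2 {x h H : ℝ} (hx : 1 ≤ x) (hh : 0 ≤ h) (hhH : h ≤ H) :
    h ^ 2 * ∑ n ∈ gapSet x H, (primeGap n - h) ≤ M2 x h := by
  set f : ℝ → ℝ := fun y => (chebTheta (y + h) - chebTheta y - h) ^ 2
  set s : ℕ → Set ℝ := fun n => Set.Ico (nthPrime n : ℝ) (nthPrime (n + 1) - h)
  have hsub : ∀ n ∈ gapSet x H, s n ⊆ Set.Ioc 1 x := fun n hn y hy => by
    have h2 : (2 : ℝ) ≤ nthPrime n := by exact_mod_cast (nthPrime_prime n).two_le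
    have := (mem_gapSet.1 hn).2.1
    exact ⟨by linarith [hy.1], by linarith [hy.2]⟩
  have hint := integrableOn_M2_integrand hh 1 x
  calc h ^ 2 * ∑ n ∈ gapSet x H, (primeGap n - h)
      = ∑ n ∈ gapSet x H, ∫ y in s n, f y := by
        rw [Finset.mul_sum]
        exact Finset.sum_congr rfl fun n hn =>
          (setIntegral_M2_integrand_Ico hh (hhH.trans (mem_gapSet.1 hn).2.2)).symm
    _ = ∫ y in ⋃ n ∈ gapSet x H, s n, f y :=
        (integral_biUnion_finset _ (fun n _ => measurableSet_Ico)
          ((pairwise_disjoint_Ico_nthPrime hh).set_pairwise _)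
          fun n hn => hint.mono_set (hsub n hn)).symm
    _ ≤ ∫ y in Set.Ioc 1 x, f y :=
        setIntegral_mono_set hint (Filter.Eventually.of_forall fun y => sq_nonneg _)
          (Filter.Eventually.of_forall (Set.iUnion₂_subset hsub))
    _ = M2 x h := (intervalIntegral.integral_of_le hx).symm

lemma sq_mul_Sgap_le_two_mul_M2 {x h H : ℝ} (hx : 1 ≤ x) (hh : 0 ≤ h) (hhH : 2 * h ≤ H) :
    h ^ 2 * Sgap x H ≤ 2 * M2 x h := by
  have hhalf : Sgap x H / 2 ≤ ∑ n ∈ gapSet x H, (primeGap n - h) := by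
    rw [Sgap_eq_sum_primeGap, Finset.sum_div]
    exact Finset.sum_le_sum fun n hn => by linarith [(mem_gapSet.1 hn).2.2]
  nlinarith [sq_mul_sum_primeGap_sub_le_M2 hx hh (by linarith : h ≤ H),
    mul_le_mul_of_nonneg_left hhalf (sq_nonneg h)]

lemma two_mul_mul_mul_log_le_rpow_sq {x : ℝ} (hx : 0 < x) (δ : ℝ) :
    2 * δ * (x * Real.log x) ≤ (x ^ ((1 : ℝ) / 2 + δ)) ^ 2 := by
  have hlog : Real.log (x ^ (2 * δ)) ≤ x ^ (2 * δ) - 1 :=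
    Real.log_le_sub_one_of_pos (Real.rpow_pos_of_pos hx _)
  rw [Real.log_rpow hx] at hlog
  have hsq : (x ^ ((1 : ℝ) / 2 + δ)) ^ 2 = x * x ^ (2 * δ) := by
    rw [← Real.rpow_natCast, ← Real.rpow_mul hx.le, show ((1 : ℝ) / 2 + δ) * (2 : ℕ) = 1 + 2 * δ by
      push_cast; ring, Real.rpow_add hx, Real.rpow_one]
  rw [hsq]
  nlinarith

lemma one_le_mul_log {x : ℝ} (hx : 2 ≤ x) : 1 ≤ x * Real.log x := by
  have := Real.log_two_gt_d9
  have := Real.log_le_log (by norm_num) hx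
  nlinarith

def SecondMomentBound (δ A : ℝ) : Prop :=
  ∀ x h : ℝ, 2 ≤ x → 1 ≤ h → h ≤ x ^ ((1 : ℝ) / 2 + δ) → M2 x h ≤ A * h * x * Real.log x

section SecondMomentBound

variable {δ A x H : ℝ}

lemma SecondMomentBound.mul_Sgap_le_of_le_rpow (hM : SecondMomentBound δ A) {h : ℝ} (hx : 2 ≤ x)
    (h1 : 1 ≤ h) (hhx : h ≤ x ^ ((1 : ℝ) / 2 + δ)) (hhH : 2 * h ≤ H) :
    h * Sgap x H ≤ 2 * A * (x * Real.log x) := by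
  have hkey := sq_mul_Sgap_le_two_mul_M2 (x := x) (by linarith) (by linarith) hhH
  have hM2 := hM x h hx h1 hhx
  refine le_of_mul_le_mul_left ?_ (by linarith : 0 < h)
  nlinarith

lemma SecondMomentBound.mul_Sgap_le_of_two_le (hM : SecondMomentBound δ A) (hδ : 0 < δ)
    (hA : 0 ≤ A) (hx : 2 ≤ x) (hH : 2 ≤ H) :
    H * Sgap x H ≤ (4 * A + 2 * A ^ 2 / δ) * (x * Real.log x) := by
  set c := x ^ ((1 : ℝ) / 2 + δ)
  have hxlog : 0 ≤ x * Real.log x := by linarith [one_le_mul_log hx]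
  rcases le_total H (2 * c) with hHc | hcH
  · have := hM.mul_Sgap_le_of_le_rpow (h := H / 2) (H := H) hx (by linarith) (by linarith)
      (by linarith)
    have : 0 ≤ 2 * A ^ 2 / δ * (x * Real.log x) := by positivity
    nlinarith
  · have hc1 : 1 ≤ c := Real.one_le_rpow (by linarith) (by positivity)
    have hcS := hM.mul_Sgap_le_of_le_rpow hx hc1 le_rfl hcH
    have hsq : (c * Sgap x H) ^ 2 ≤ (2 * A * (x * Real.log x)) ^ 2 :=
      pow_le_pow_left₀ (mul_nonneg (by linarith) (Sgap_nonneg x H)) hcS 2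
    have hc2 := two_mul_mul_mul_log_le_rpow_sq (by linarith : 0 < x) δ
    have hc0 : 0 < c ^ 2 := by positivity
    have hHS : c ^ 2 * (H * Sgap x H) ≤ c ^ 2 * (2 * A ^ 2 / δ * (x * Real.log x)) :=
      calc c ^ 2 * (H * Sgap x H) ≤ (c * Sgap x H) ^ 2 := by
            nlinarith [mul_Sgap_le_sq_Sgap x H]
        _ ≤ (2 * A * (x * Real.log x)) ^ 2 := hsq
        _ = 2 * A ^ 2 / δ * (x * Real.log x) * (2 * δ * (x * Real.log x)) := by
            field_simp
        _ ≤ 2 * A ^ 2 / δ * (x * Real.log x) * c ^ 2 :=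
            mul_le_mul_of_nonneg_left hc2 (by positivity)
        _ = c ^ 2 * (2 * A ^ 2 / δ * (x * Real.log x)) := mul_comm _ _
    have := le_of_mul_le_mul_left hHS hc0
    nlinarith

lemma SecondMomentBound.mul_Sgap_le (hM : SecondMomentBound δ A) (hδ : 0 < δ) (hA : 0 ≤ A)
    (hx : 2 ≤ x) :
    H * Sgap x H ≤ (4 * A + 2 * A ^ 2 / δ + 2) * (x * Real.log x) := by
  have hxlog := one_le_mul_log hx
  rcases le_total 2 H with h2H | hH2
  · nlinarith [hM.mul_Sgap_le_of_two_le hδ hA hx h2H]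
  · have h2 := hM.mul_Sgap_le_of_two_le hδ hA hx le_rfl
    nlinarith [Sgap_le_one_add_Sgap_two x H, Sgap_nonneg x H]

end SecondMomentBound

lemma Ngap_le_and_Sgap_le_of_mul_Sgap_le {x H B : ℝ} (hH : 0 < H) (hB : H * Sgap x H ≤ B) :
    Ngap x H ≤ B / H ^ 2 ∧ Sgap x H ≤ B / H := by
  refine ⟨(le_div_iff₀ (by positivity)).2 ?_, (le_div_iff₀ hH).2 (by linarith)⟩
  nlinarith [Ngap_mul_le_Sgap x H]

/-- (Heath-Brown, conditional form) If M₂(x, h) ≤ A h x log x for 1 ≤ h ≤ x^{1/2+δ},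
then N(x, H) ≪ (x/H²) log x and S(x, H) ≪ (x/H) log x. -/
theorem heathBrown_gap_bounds (δ A : ℝ) (hδ : 0 < δ) (hA : 0 < A)
    (hM : ∀ x h : ℝ, 2 ≤ x → 1 ≤ h → h ≤ x ^ ((1 : ℝ) / 2 + δ) →
      M2 x h ≤ A * h * x * Real.log x) :
    ∃ C : ℝ, ∀ x H : ℝ, 2 ≤ x → 1 ≤ H →
      Ngap x H ≤ C * (x / H ^ 2) * Real.log x ∧
      Sgap x H ≤ C * (x / H) * Real.log x := by
  refine ⟨4 * A + 2 * A ^ 2 / δ + 2, fun x H hx hH => ?_⟩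
  obtain ⟨hN, hS⟩ := Ngap_le_and_Sgap_le_of_mul_Sgap_le (by linarith)
    ((show SecondMomentBound δ A from hM).mul_Sgap_le hδ hA.le hx)
  exact ⟨hN.trans_eq (by ring), hS.trans_eq (by ring)⟩
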